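/- For every topological space X, the following are equivalent: (1) X is consonant; (2) the map σ : A(K(X)) → K(A(X)), σ(𝒜) = {A closed | ∀K ∈ 𝒜, A ∩ K ≠ ∅}, is a bijection; (3) the map τ : K(A(X)) → A(K(X)), τ(𝒦) = {K compact saturated | ∀A ∈ 𝒦, A ∩ K ≠ ∅}, satisfies τ⁻¹(◇□U) = □◇U for every open U ⊆ X. -/

import Mathlib

open Set Topology

/-- The lower powerspace: closed subsets of `X`. -/
def LowerPS (X : Type*) [TopologicalSpace X] : Type _ := {A : Set X // IsClosed A}

/-- Lower Vietoris topology, generated by the sets `◇U = {A | A ∩ U ≠ ∅}` for `U` open. -/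
instance (X : Type*) [TopologicalSpace X] : TopologicalSpace (LowerPS X) :=
  .generateFrom {S | ∃ U : Set X, IsOpen U ∧ S = {A : LowerPS X | (A.1 ∩ U).Nonempty}}

/-- The upper powerspace: compact saturated subsets of `X`
(saturated = intersection of all open neighborhoods). -/
def UpperPS (X : Type*) [TopologicalSpace X] : Type _ :=
  {K : Set X // IsCompact K ∧ K = ⋂₀ {U : Set X | IsOpen U ∧ K ⊆ U}}

/-- Upper Vietoris topology, generated by the sets `□U = {K | K ⊆ U}` for `U` open. -/
instance (X : Type*) [TopologicalSpace X] : TopologicalSpace (UpperPS X) :=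
  .generateFrom {S | ∃ U : Set X, IsOpen U ∧ S = {K : UpperPS X | K.1 ⊆ U}}

/-- A `Π⁰₂` subset. -/
def IsPi02 {Y : Type*} [TopologicalSpace Y] (S : Set Y) : Prop :=
  ∃ U V : ℕ → Set Y, (∀ i, IsOpen (U i)) ∧ (∀ i, IsOpen (V i)) ∧
    ∀ y, y ∈ S ↔ ∀ i, y ∈ U i → y ∈ V i

/-- The Scott topology on `P(ω)`, generated by the sets `{x | F ⊆ x}` for finite `F`. -/
instance : TopologicalSpace (Set ℕ) :=
  .generateFrom {S | ∃ F : Finset ℕ, S = {x : Set ℕ | ↑F ⊆ x}}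

/-- A space is quasi-Polish iff it is homeomorphic to a `Π⁰₂` subspace of `P(ω)`
with the Scott topology. -/
def QuasiPolish (X : Type*) [TopologicalSpace X] : Prop :=
  ∃ S : Set (Set ℕ), IsPi02 S ∧ Nonempty (X ≃ₜ S)

/-- Scott-open subsets of a preorder. -/
def IsScottOpen {α : Type*} [Preorder α] (U : Set α) : Prop :=
  (∀ ⦃a b : α⦄, a ≤ b → a ∈ U → b ∈ U) ∧
  ∀ d : Set α, d.Nonempty → DirectedOn (· ≤ ·) d → ∀ a : α, IsLUB d a → a ∈ U →
    (d ∩ U).Nonempty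

/-- The Scott topology on a preorder. -/
def scottTop (α : Type*) [Preorder α] : TopologicalSpace α := .generateFrom {U | IsScottOpen U}

/-- The frame of open subsets of `X`, ordered by inclusion. -/
def OpensT (X : Type*) [TopologicalSpace X] : Type _ := {U : Set X // IsOpen U}

instance (X : Type*) [TopologicalSpace X] : PartialOrder (OpensT X) :=
  inferInstanceAs (PartialOrder {U : Set X // IsOpen U})

/-- `O(X)` carries the Scott topology. -/
instance (X : Type*) [TopologicalSpace X] : TopologicalSpace (OpensT X) := scottTop (OpensT X)

/-- `□◇U` in `K(A(X))`. -/
def boxDia {X : Type*} [TopologicalSpace X] (U : Set X) : Set (UpperPS (LowerPS X)) :=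
  {𝒦 | ∀ A ∈ 𝒦.1, ((A : LowerPS X).1 ∩ U).Nonempty}

/-- `◇□U` in `A(K(X))`. -/
def diaBox {X : Type*} [TopologicalSpace X] (U : Set X) : Set (LowerPS (UpperPS X)) :=
  {𝒜 | ∃ K ∈ 𝒜.1, (K : UpperPS X).1 ⊆ U}

/-- A space is consonant iff every Scott-open family of opens containing `U` contains
a compact-saturated filter neighborhood `▽K` of `U`. -/
def Consonant (X : Type*) [TopologicalSpace X] : Prop :=
  ∀ H : Set (OpensT X), IsScottOpen H → ∀ U ∈ H,
    ∃ K : UpperPS X, K.1 ⊆ U.1 ∧ ∀ V : OpensT X, K.1 ⊆ V.1 → V ∈ H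

/-- A space is co-consonant. -/
def CoConsonant (Y : Type*) [TopologicalSpace Y] : Prop :=
  ∀ H : Set (OpensT Y), IsScottOpen H → ∀ U ∈ H,
    ∃ F : Finset (Set Y), (∀ A ∈ F, IsClosed A) ∧ (∀ A ∈ F, (U.1 ∩ A).Nonempty) ∧
      ∀ V : OpensT Y, (∀ A ∈ F, (V.1 ∩ A).Nonempty) → V ∈ H

/-!
Both `σ` and `τ` send a family of sets to its transversals, the sets meeting every member.
`τ ∘ σ = id` always: a closed family of compact saturated sets is recovered from the basic opens
`□V` that miss it. All three conditions reduce to one transversal property: whenever every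
member of a compact saturated family `𝒦` of closed sets meets an open `U`, some compact saturated
`K ⊆ U` meets every member of `𝒦`. Consonance yields it, applied to the Scott-open family
`{V | every member of 𝒦 meets V}`. Conversely, for a Scott-open `ℋ`, the closed sets whose
complement lies outside `ℋ` form a compact saturated family (Alexander's subbasis theorem), and
a transversal `K ⊆ U` of it satisfies `▽K ⊆ ℋ`. The transversal property also gives
`σ ∘ τ = id`, and it follows from the surjectivity of `σ` because `τ ∘ σ = id`.
-/

section Transversals

open TopologicalSpace

variable {X : Type*} [TopologicalSpace X]

namespace LowerPS

def dia (U : Set X) : Set (LowerPS X) := {A | (A.1 ∩ U).Nonempty}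

lemma isOpen_dia {U : Set X} (hU : IsOpen U) : IsOpen (dia U) := .basic _ ⟨U, hU, rfl⟩

lemma dia_mono {U V : Set X} (h : U ⊆ V) : dia U ⊆ dia V :=
  fun _ ⟨x, hxA, hxU⟩ => ⟨x, hxA, h hxU⟩

lemma mem_of_subset_of_isOpen {G : Set (LowerPS X)} (hG : IsOpen G) {A B : LowerPS X}
    (hAB : A.1 ⊆ B.1) (hA : A ∈ G) : B ∈ G := by
  change GenerateOpen _ G at hG
  induction hG with
  | basic _ hs =>
      obtain ⟨U, -, rfl⟩ := hs
      exact hA.mono (inter_subset_inter_left U hAB)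
  | univ => trivial
  | inter _ _ _ _ ihs iht => exact ⟨ihs hA.1, iht hA.2⟩
  | sUnion _ _ ih =>
      obtain ⟨s, hs, hAs⟩ := hA
      exact ⟨s, hs, ih s hs hAs⟩

def compl (A : LowerPS X) : OpensT X := ⟨A.1ᶜ, A.2.isOpen_compl⟩

end LowerPS

namespace UpperPS

def box (U : Set X) : Set (UpperPS X) := {K | K.1 ⊆ U}

lemma isOpen_box {U : Set X} (hU : IsOpen U) : IsOpen (box U) := .basic _ ⟨U, hU, rfl⟩

lemma isTopologicalBasis_box :
    IsTopologicalBasis {S : Set (UpperPS X) | ∃ U, IsOpen U ∧ S = box U} :=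
  isTopologicalBasis_of_subbasis_of_finiteInter rfl
    ⟨⟨univ, isOpen_univ, by ext; simp [box]⟩, by
      rintro _ ⟨U, hU, rfl⟩ _ ⟨V, hV, rfl⟩
      exact ⟨U ∩ V, hU.inter hV, by ext; simp [box]⟩⟩

lemma exists_box_subset {G : Set (UpperPS X)} (hG : IsOpen G) {K : UpperPS X} (hK : K ∈ G) :
    ∃ V, IsOpen V ∧ K.1 ⊆ V ∧ box V ⊆ G := by
  obtain ⟨_, ⟨V, hV, rfl⟩, hKV, hVG⟩ := isTopologicalBasis_box.exists_subset_of_mem_open hK hG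
  exact ⟨V, hV, hKV, hVG⟩

end UpperPS

namespace OpensT

def sUnion (𝒱 : Set (OpensT X)) : OpensT X := ⟨⋃ V ∈ 𝒱, V.1, isOpen_biUnion fun V _ => V.2⟩

lemma isLUB_sUnion (𝒱 : Set (OpensT X)) : IsLUB 𝒱 (sUnion 𝒱) :=
  ⟨fun _ hV => subset_biUnion_of_mem (u := fun V : OpensT X => V.1) hV,
    fun _ hb => iUnion₂_subset fun _ hV => hb hV⟩

lemma sUnion_mono {𝒱 𝒲 : Set (OpensT X)} (h : 𝒱 ⊆ 𝒲) : sUnion 𝒱 ≤ sUnion 𝒲 :=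
  (isLUB_sUnion 𝒱).2 fun _ hV => (isLUB_sUnion 𝒲).1 (h hV)

def compl (V : OpensT X) : LowerPS X := ⟨V.1ᶜ, V.2.isClosed_compl⟩

@[simp]
lemma compl_compl (V : OpensT X) : V.compl.compl = V := Subtype.ext (_root_.compl_compl _)

end OpensT

namespace IsScottOpen

variable {ℋ : Set (OpensT X)}

lemma inter_nonempty_of_compl_notMem (hℋ : IsScottOpen ℋ) {V : OpensT X} (hV : V ∈ ℋ)
    {A : LowerPS X} (hA : A.compl ∉ ℋ) : (A.1 ∩ V.1).Nonempty := by
  by_contra hAV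
  exact hA (hℋ.1 (fun x hxV hxA => hAV ⟨x, hxA, hxV⟩) hV)

lemma exists_finset_sUnion_mem (hℋ : IsScottOpen ℋ) {𝒱 : Set (OpensT X)}
    (h : OpensT.sUnion 𝒱 ∈ ℋ) :
    ∃ F : Finset (OpensT X), ↑F ⊆ 𝒱 ∧ OpensT.sUnion (F : Set (OpensT X)) ∈ ℋ := by
  classical
  set d := (fun F : Finset (OpensT X) => OpensT.sUnion (F : Set (OpensT X))) ''
    {F | ↑F ⊆ 𝒱}
  have hdir : DirectedOn (· ≤ ·) d := by
    rintro _ ⟨F, hF, rfl⟩ _ ⟨G, hG, rfl⟩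
    refine ⟨_, ⟨F ∪ G, ?_, rfl⟩, OpensT.sUnion_mono ?_, OpensT.sUnion_mono ?_⟩ <;>
      simp_all [Finset.coe_union, union_subset_iff]
  have hlub : IsLUB d (OpensT.sUnion 𝒱) := by
    refine ⟨?_, fun b hb => (OpensT.isLUB_sUnion 𝒱).2 fun V hV => ?_⟩
    · rintro _ ⟨F, hF, rfl⟩
      exact OpensT.sUnion_mono hF
    · exact le_trans ((OpensT.isLUB_sUnion _).1 (by simp)) (hb ⟨{V}, by simpa using hV, rfl⟩)
  obtain ⟨_, ⟨F, hF, rfl⟩, hFℋ⟩ := hℋ.2 d ⟨_, ∅, by simp, rfl⟩ hdir _ hlub h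
  exact ⟨F, hF, hFℋ⟩

end IsScottOpen

lemma IsCompact.isScottOpen_setOf_subset_dia {𝒦 : Set (LowerPS X)} (h𝒦 : IsCompact 𝒦) :
    IsScottOpen {V : OpensT X | 𝒦 ⊆ LowerPS.dia V.1} := by
  refine ⟨fun U V hUV hU => hU.trans (LowerPS.dia_mono hUV), fun d hd hdir a ha h𝒦a => ?_⟩
  have : Nonempty d := hd.to_subtype
  have hcover : 𝒦 ⊆ ⋃ V : d, LowerPS.dia V.1.1 := by
    rw [ha.unique (OpensT.isLUB_sUnion d)] at h𝒦a
    intro A hA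
    obtain ⟨x, hxA, hx⟩ := h𝒦a hA
    obtain ⟨V, hV, hxV⟩ := mem_iUnion₂.1 hx
    exact mem_iUnion.2 ⟨⟨V, hV⟩, x, hxA, hxV⟩
  obtain ⟨V, hV⟩ := h𝒦.elim_directed_cover (fun V : d => LowerPS.dia V.1.1)
    (fun V => LowerPS.isOpen_dia V.1.2) hcover
    (hdir.directed_val.mono_comp (g := fun V : OpensT X => LowerPS.dia V.1) _
      fun _ _ h => LowerPS.dia_mono h)
  exact ⟨V.1, V.2, hV⟩

lemma isCompact_setOf_compl_notMem {ℋ : Set (OpensT X)} (hℋ : IsScottOpen ℋ) :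
    IsCompact {A : LowerPS X | A.compl ∉ ℋ} := by
  refine isCompact_generateFrom rfl fun P hP hcover => ?_
  set 𝒱 : Set (OpensT X) := {V | LowerPS.dia V.1 ∈ P}
  have h𝒱 : OpensT.sUnion 𝒱 ∈ ℋ := by
    by_contra h
    obtain ⟨_, hsP, hs⟩ := hcover (show (OpensT.sUnion 𝒱).compl ∈ _ by simpa)
    obtain ⟨V, hV, rfl⟩ := hP hsP
    obtain ⟨x, hx, hxV⟩ := hs
    exact hx ((OpensT.isLUB_sUnion 𝒱).1 (show ⟨V, hV⟩ ∈ 𝒱 from hsP) hxV)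
  obtain ⟨F, hF𝒱, hFℋ⟩ := hℋ.exists_finset_sUnion_mem h𝒱
  refine ⟨(fun V : OpensT X => LowerPS.dia V.1) '' ↑F, image_subset_iff.2 hF𝒱,
    F.finite_toSet.image _, fun A hA => ?_⟩
  obtain ⟨x, hxA, hx⟩ := hℋ.inter_nonempty_of_compl_notMem hFℋ hA
  obtain ⟨V, hV, hxV⟩ := mem_iUnion₂.1 hx
  exact ⟨_, mem_image_of_mem _ hV, x, hxA, hxV⟩

lemma setOf_compl_notMem_eq_sInter {ℋ : Set (OpensT X)} (hℋ : IsScottOpen ℋ) :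
    {A : LowerPS X | A.compl ∉ ℋ} =
      ⋂₀ {G | IsOpen G ∧ {A : LowerPS X | A.compl ∉ ℋ} ⊆ G} := by
  refine Subset.antisymm (subset_sInter fun G hG => hG.2) fun B hB hBℋ => ?_
  obtain ⟨x, hxB, hx⟩ := hB (LowerPS.dia B.1ᶜ)
    ⟨LowerPS.isOpen_dia B.2.isOpen_compl, fun A hA => hℋ.inter_nonempty_of_compl_notMem hBℋ hA⟩
  exact hx hxB

def sigmaSet (𝒜 : Set (UpperPS X)) : Set (LowerPS X) := {A | ∀ K ∈ 𝒜, (A.1 ∩ K.1).Nonempty}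

def tauSet (𝒦 : Set (LowerPS X)) : Set (UpperPS X) := {K | ∀ A ∈ 𝒦, (A.1 ∩ K.1).Nonempty}

lemma isClosed_tauSet (𝒦 : Set (LowerPS X)) : IsClosed (tauSet 𝒦) := by
  have h : (tauSet 𝒦)ᶜ = ⋃ A ∈ 𝒦, UpperPS.box A.1ᶜ := by
    ext K
    simp [tauSet, UpperPS.box, subset_compl_iff_disjoint_left, disjoint_iff_inter_eq_empty,
      not_nonempty_iff_eq_empty, inter_comm]
  rw [← isOpen_compl_iff, h]
  exact isOpen_biUnion fun A _ => UpperPS.isOpen_box A.2.isOpen_compl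

lemma tauSet_sigmaSet {𝒜 : Set (UpperPS X)} (h𝒜 : IsClosed 𝒜) : tauSet (sigmaSet 𝒜) = 𝒜 := by
  refine Subset.antisymm (fun K hK => ?_) fun K hK A hA => hA K hK
  by_contra hK𝒜
  obtain ⟨V, hV, hKV, hV𝒜⟩ := UpperPS.exists_box_subset h𝒜.isOpen_compl hK𝒜
  have hVσ : OpensT.compl ⟨V, hV⟩ ∈ sigmaSet 𝒜 := fun L hL => by
    obtain ⟨x, hxL, hxV⟩ := not_subset.1 fun hLV => hV𝒜 hLV hL
    exact ⟨x, hxV, hxL⟩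
  obtain ⟨x, hxV, hxK⟩ := hK _ hVσ
  exact hxV (hKV hxK)

def HasCompactTransversals (X : Type*) [TopologicalSpace X] : Prop :=
  ∀ U : Set X, IsOpen U → ∀ 𝒦 ∈ boxDia U, ∃ K ∈ tauSet 𝒦.1, K.1 ⊆ U

lemma sigmaSet_tauSet (hX : HasCompactTransversals X) (𝒦 : UpperPS (LowerPS X)) :
    sigmaSet (tauSet 𝒦.1) = 𝒦.1 := by
  refine Subset.antisymm (fun A hA => ?_) fun A hA K hK => hK A hA
  obtain ⟨B, hB, hBA⟩ : ∃ B ∈ 𝒦.1, B.1 ⊆ A.1 := by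
    by_contra! h
    obtain ⟨K, hK, hKA⟩ := hX _ A.2.isOpen_compl 𝒦 fun B hB => not_subset.1 (h B hB)
    obtain ⟨x, hxA, hxK⟩ := hA K hK
    exact hKA hxK hxA
  rw [𝒦.2.2]
  exact fun G hG => LowerPS.mem_of_subset_of_isOpen hG.1 hBA (hG.2 hB)

lemma hasCompactTransversals_of_surjective (σ : LowerPS (UpperPS X) → UpperPS (LowerPS X))
    (hσ : ∀ 𝒜, (σ 𝒜).1 = sigmaSet 𝒜.1) (hσs : Function.Surjective σ) :
    HasCompactTransversals X := by
  intro U hU 𝒦 h𝒦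
  obtain ⟨𝒜, rfl⟩ := hσs 𝒦
  by_contra! h
  have hU𝒜 : OpensT.compl ⟨U, hU⟩ ∈ (σ 𝒜).1 := by
    rw [hσ]
    intro K hK
    obtain ⟨x, hxK, hxU⟩ := not_subset.1 (h K (by rwa [hσ, tauSet_sigmaSet 𝒜.2]))
    exact ⟨x, hxU, hxK⟩
  obtain ⟨x, hxU, hx⟩ := h𝒦 _ hU𝒜
  exact hxU hx

lemma bijective_iff_hasCompactTransversals (σ : LowerPS (UpperPS X) → UpperPS (LowerPS X))
    (hσ : ∀ 𝒜, (σ 𝒜).1 = sigmaSet 𝒜.1) :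
    Function.Bijective σ ↔ HasCompactTransversals X := by
  have hinj : Function.Injective σ := fun 𝒜 𝒜' h => Subtype.ext <| by
    rw [← tauSet_sigmaSet 𝒜.2, ← tauSet_sigmaSet 𝒜'.2, ← hσ, ← hσ, h]
  refine ⟨fun h => hasCompactTransversals_of_surjective σ hσ h.2, fun hX => ⟨hinj, fun 𝒦 => ?_⟩⟩
  exact ⟨⟨tauSet 𝒦.1, isClosed_tauSet _⟩, Subtype.ext ((hσ _).trans (sigmaSet_tauSet hX 𝒦))⟩

lemma preimage_diaBox_eq_boxDia_iff (τ : UpperPS (LowerPS X) → LowerPS (UpperPS X))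
    (hτ : ∀ 𝒦, (τ 𝒦).1 = tauSet 𝒦.1) :
    (∀ U : Set X, IsOpen U → τ ⁻¹' diaBox U = boxDia U) ↔ HasCompactTransversals X := by
  have hpre (U : Set X) : τ ⁻¹' diaBox U = {𝒦 | ∃ K ∈ tauSet 𝒦.1, K.1 ⊆ U} := by
    ext 𝒦
    simp only [mem_preimage, diaBox, mem_ofPred_eq, hτ]
  have hsub (U : Set X) : {𝒦 : UpperPS (LowerPS X) | ∃ K ∈ tauSet 𝒦.1, K.1 ⊆ U} ⊆ boxDia U := by
    rintro 𝒦 ⟨K, hK, hKU⟩ A hA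
    obtain ⟨x, hxA, hxK⟩ := hK A hA
    exact ⟨x, hxA, hKU hxK⟩
  simp only [hpre, subset_antisymm_iff, hsub, true_and]
  rfl

lemma Consonant.hasCompactTransversals (hX : Consonant X) : HasCompactTransversals X := by
  intro U hU 𝒦 h𝒦
  obtain ⟨K, hKU, hK⟩ := hX _ 𝒦.2.1.isScottOpen_setOf_subset_dia ⟨U, hU⟩ h𝒦
  refine ⟨K, fun A hA => ?_, hKU⟩
  by_contra hAK
  obtain ⟨x, hxA, hx⟩ := hK A.compl (fun x hxK hxA => hAK ⟨x, hxA, hxK⟩) hA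
  exact hx hxA

lemma HasCompactTransversals.consonant (hX : HasCompactTransversals X) : Consonant X := by
  intro ℋ hℋ U hU
  let 𝒦 : UpperPS (LowerPS X) :=
    ⟨{A | A.compl ∉ ℋ}, isCompact_setOf_compl_notMem hℋ, setOf_compl_notMem_eq_sInter hℋ⟩
  obtain ⟨K, hK, hKU⟩ := hX U.1 U.2 𝒦 fun A hA => hℋ.inter_nonempty_of_compl_notMem hU hA
  refine ⟨K, hKU, fun V hKV => ?_⟩
  by_contra hV
  obtain ⟨x, hxV, hxK⟩ := hK V.compl (by simpa [𝒦] using hV)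
  exact hxV (hKV hxK)

lemma consonant_iff_hasCompactTransversals : Consonant X ↔ HasCompactTransversals X :=
  ⟨Consonant.hasCompactTransversals, HasCompactTransversals.consonant⟩

end Transversals

/-- For any topological space `X`, the following are equivalent: (1) `X` is consonant;
(2) `σ : A(K(X)) → K(A(X))` is a bijection; (3) `τ⁻¹(◇□U) = □◇U` for every open `U`. -/
theorem consonant_iff_sigma_bijective_iff_tau (X : Type*) [TopologicalSpace X]
    (σ : LowerPS (UpperPS X) → UpperPS (LowerPS X))
    (hσ : ∀ 𝒜, (σ 𝒜).1 =
        {A : LowerPS X | ∀ K ∈ 𝒜.1, (A.1 ∩ (K : UpperPS X).1).Nonempty})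
    (τ : UpperPS (LowerPS X) → LowerPS (UpperPS X))
    (hτ : ∀ 𝒦, (τ 𝒦).1 =
        {K : UpperPS X | ∀ A ∈ 𝒦.1, ((A : LowerPS X).1 ∩ K.1).Nonempty}) :
    (Consonant X ↔ Function.Bijective σ) ∧
      (Consonant X ↔ ∀ U : Set X, IsOpen U → τ ⁻¹' diaBox U = boxDia U) := by
  rw [bijective_iff_hasCompactTransversals σ hσ, preimage_diaBox_eq_boxDia_iff τ hτ]
  exact ⟨consonant_iff_hasCompactTransversals, consonant_iff_hasCompactTransversals⟩
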